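/- For every LF object M and objects N, x, the term encoding commutes with substitution: ⟨M[N/x]⟩ = ⟨M⟩[⟨N⟩/x], where ⟨·⟩ is the lossy encoding of LF objects into simply typed lambda terms. -/

import Mathlib

/- De Bruijn presentation of LF: kinds, types, objects (with meta-variables). -/
mutual
inductive LTy : Type where
  | const : Nat → LTy
  | pi : LTy → LTy → LTy
  | app : LTy → LObj → LTy
inductive LObj : Type where
  | const : Nat → LObj
  | var : Nat → LObj
  | mvar : Nat → LObj
  | app : LObj → LObj → LObj
  | lam : LTy → LObj → LObj
end

inductive LKind : Type where
  | type : LKind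
  | pi : LTy → LKind → LKind

mutual
def liftTy (d : Nat) : LTy → LTy
  | .const a => .const a
  | .pi A B => .pi (liftTy d A) (liftTy (d+1) B)
  | .app A M => .app (liftTy d A) (liftObj d M)
def liftObj (d : Nat) : LObj → LObj
  | .const c => .const c
  | .var k => if k < d then .var k else .var (k+1)
  | .mvar X => .mvar X
  | .app M N => .app (liftObj d M) (liftObj d N)
  | .lam A M => .lam (liftTy d A) (liftObj (d+1) M)
end

def liftKind (d : Nat) : LKind → LKind
  | .type => .type
  | .pi A K => .pi (liftTy d A) (liftKind (d+1) K)

/- Capture-avoiding substitution of an object for de Bruijn variable d. -/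
mutual
def substTy (d : Nat) (s : LObj) : LTy → LTy
  | .const a => .const a
  | .pi A B => .pi (substTy d s A) (substTy (d+1) (liftObj 0 s) B)
  | .app A M => .app (substTy d s A) (substObj d s M)
def substObj (d : Nat) (s : LObj) : LObj → LObj
  | .const c => .const c
  | .var k => if k = d then s else if d < k then .var (k-1) else .var k
  | .mvar X => .mvar X
  | .app M N => .app (substObj d s M) (substObj d s N)
  | .lam A M => .lam (substTy d s A) (substObj (d+1) (liftObj 0 s) M)
end

def substKind (d : Nat) (s : LObj) : LKind → LKind
  | .type => .type
  | .pi A K => .pi (substTy d s A) (substKind (d+1) (liftObj 0 s) K)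

/- Context lookup with the appropriate lifting. -/
inductive Lk : List LTy → Nat → LTy → Prop where
  | zero : Lk (A :: Γ) 0 (liftTy 0 A)
  | succ : Lk Γ k A → Lk (B :: Γ) (k+1) (liftTy 0 A)

/- LF typing judgments, relative to a signature (ts for kinds of type constants,
   os for types of object constants) and a meta-variable context Δ. -/
mutual
inductive WfKind (ts : Nat → LKind) (os : Nat → LTy) (Δ : Nat → LTy) :
    List LTy → LKind → Prop where
  | type : WfKind ts os Δ Γ .type
  | pi : HasKind ts os Δ Γ A .type → WfKind ts os Δ (A :: Γ) K →
      WfKind ts os Δ Γ (.pi A K)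
inductive HasKind (ts : Nat → LKind) (os : Nat → LTy) (Δ : Nat → LTy) :
    List LTy → LTy → LKind → Prop where
  | const : HasKind ts os Δ Γ (.const a) (ts a)
  | pi : HasKind ts os Δ Γ A .type → HasKind ts os Δ (A :: Γ) B .type →
      HasKind ts os Δ Γ (.pi A B) .type
  | app : HasKind ts os Δ Γ A (.pi B K) → HasTy ts os Δ Γ M B →
      HasKind ts os Δ Γ (.app A M) (substKind 0 M K)
inductive HasTy (ts : Nat → LKind) (os : Nat → LTy) (Δ : Nat → LTy) :
    List LTy → LObj → LTy → Prop where
  | const : HasTy ts os Δ Γ (.const c) (os c)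
  | var : Lk Γ k A → HasTy ts os Δ Γ (.var k) A
  | mvar : HasTy ts os Δ Γ (.mvar X) (Δ X)
  | lam : HasKind ts os Δ Γ A .type → HasTy ts os Δ (A :: Γ) M B →
      HasTy ts os Δ Γ (.lam A M) (.pi A B)
  | app : HasTy ts os Δ Γ M (.pi A B) → HasTy ts os Δ Γ N A →
      HasTy ts os Δ Γ (.app M N) (substTy 0 N B)
end
/- Simple types with the two atomic types lf-obj and lf-type. -/
inductive STy : Type where
  | lfObj : STy
  | lfType : STy
  | arr : STy → STy → STy

/- The flattening map φ on LF types (base types go to lf-obj). -/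
def phiTy : LTy → STy
  | .const _ => .lfObj
  | .app _ _ => .lfObj
  | .pi A B => .arr (phiTy A) (phiTy B)

/- The flattening map φ on LF kinds. -/
def phiKind : LKind → STy
  | .type => .lfType
  | .pi A K => .arr (phiTy A) (phiKind K)

/- Simply typed λ-terms (hohh terms), with meta-variables. -/
inductive Tm : Type where
  | const : Nat → Tm
  | var : Nat → Tm
  | mvar : Nat → Tm
  | app : Tm → Tm → Tm
  | lam : STy → Tm → Tm

def liftTm (d : Nat) : Tm → Tm
  | .const c => .const c
  | .var k => if k < d then .var k else .var (k+1)
  | .mvar X => .mvar X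
  | .app m n => .app (liftTm d m) (liftTm d n)
  | .lam τ m => .lam τ (liftTm (d+1) m)

def substTm (d : Nat) (s : Tm) : Tm → Tm
  | .const c => .const c
  | .var k => if k = d then s else if d < k then .var (k-1) else .var k
  | .mvar X => .mvar X
  | .app m n => .app (substTm d s m) (substTm d s n)
  | .lam τ m => .lam τ (substTm (d+1) (liftTm 0 s) m)

/- The lossy encoding ⟨·⟩ of LF objects as simply typed terms. -/
def enc : LObj → Tm
  | .const c => .const c
  | .var k => .var k
  | .mvar X => .mvar X
  | .app M N => .app (enc M) (enc N)
  | .lam A M => .lam (phiTy A) (enc M)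

/- STLC typing, relative to a signature cs and meta-variable typing ms. -/
inductive SHas (cs : Nat → STy) (ms : Nat → STy) : List STy → Tm → STy → Prop where
  | const : SHas cs ms Γ (.const c) (cs c)
  | var : Γ[k]? = some τ → SHas cs ms Γ (.var k) τ
  | mvar : SHas cs ms Γ (.mvar X) (ms X)
  | app : SHas cs ms Γ m (.arr τ σ) → SHas cs ms Γ n τ → SHas cs ms Γ (.app m n) σ
  | lam : SHas cs ms (τ :: Γ) m σ → SHas cs ms Γ (.lam τ m) (.arr τ σ)

/-
Flattening forgets the objects a type depends on, so lifting or substituting inside a type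
annotation leaves its image under φ unchanged. Hence ⟨·⟩ commutes with lifting, and then with
substitution by structural recursion on the object: under a binder the substituend is lifted on
both sides, which is exactly where commuting with lifting is needed.
-/

theorem phiTy_liftTy : ∀ (A : LTy) (d : Nat), phiTy (liftTy d A) = phiTy A
  | .const _, _ => rfl
  | .pi A B, d => by rw [liftTy, phiTy, phiTy, phiTy_liftTy A d, phiTy_liftTy B (d + 1)]
  | .app _ _, _ => rfl

theorem phiTy_substTy : ∀ (A : LTy) (d : Nat) (s : LObj), phiTy (substTy d s A) = phiTy A
  | .const _, _, _ => rfl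
  | .pi A B, d, s => by
    rw [substTy, phiTy, phiTy, phiTy_substTy A d s, phiTy_substTy B (d + 1) (liftObj 0 s)]
  | .app _ _, _, _ => rfl

theorem enc_liftObj : ∀ (M : LObj) (d : Nat), enc (liftObj d M) = liftTm d (enc M)
  | .const _, _ => rfl
  | .var k, d => by simp only [liftObj, liftTm, enc]; split_ifs <;> rfl
  | .mvar _, _ => rfl
  | .app M N, d => by rw [liftObj, enc, enc, liftTm, enc_liftObj M d, enc_liftObj N d]
  | .lam A M, d => by rw [liftObj, enc, enc, liftTm, enc_liftObj M (d + 1), phiTy_liftTy]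

/-- The encoding of LF objects into STLC terms commutes with substitution:
    ⟨M[N/x]⟩ = ⟨M⟩[⟨N⟩/x]. -/
theorem encoding_commutes_with_substitution
    (M N : LObj) (d : Nat) :
    enc (substObj d N M) = substTm d (enc N) (enc M) :=
  match M with
  | .const _ => rfl
  | .var k => by simp only [substObj, substTm, enc]; split_ifs <;> rfl
  | .mvar _ => rfl
  | .app M₁ M₂ => by
    rw [substObj, enc, enc, substTm, encoding_commutes_with_substitution M₁ N d,
      encoding_commutes_with_substitution M₂ N d]
  | .lam A M => by
    rw [substObj, enc, enc, substTm, phiTy_substTy,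
      encoding_commutes_with_substitution M (liftObj 0 N) (d + 1), enc_liftObj]
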